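/- Let n ≥ 1, let ℓ₁, ℓ₂, ℓ₃ be literals whose propositional variables are p_a, p_b, p_c respectively with a < b < c ≤ n, let f be a propositional variable distinct from p₁,…,p_n, and define label_false(ℓ₁ ∧ ℓ₂ ∧ ℓ₃) = □^{a-1}◇□^{b-a-1}◇□^{c-b-1}◇□^{n-c}(ℓ₁ ∧ ℓ₂ ∧ ℓ₃ ∧ f). If M is a model based on a binary tree with root r and M,r ⊨ φ_exp (where φ_exp = ⋀_{i=1}^n □^{i-1}(◇□^{n-i} p_i ∧ ◇□^{n-i} p̄_i)), then M,r ⊨ label_false(ℓ₁ ∧ ℓ₂ ∧ ℓ₃) if and only if f holds in every world at depth n in which ℓ₁ ∧ ℓ₂ ∧ ℓ₃ holds. -/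
import Mathlib


namespace PoorMansModal

/-- Modal formulas over propositional variables of type `α`: variables `p`,
negated variables `p̄`, general negation, conjunction, disjunction, box, diamond,
and the constants `true` and `false`. -/
inductive Fml (α : Type) : Type where
  | var : α → Fml α
  | nvar : α → Fml α
  | neg : Fml α → Fml α
  | and : Fml α → Fml α → Fml α
  | or : Fml α → Fml α → Fml α
  | box : Fml α → Fml α
  | dia : Fml α → Fml α
  | tru : Fml α
  | fls : Fml α

/-- A Kripke model: a nonempty set of worlds, an accessibility relation, and a valuation. -/
structure Kripke (α : Type) where
  World : Type
  nonempty : Nonempty World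
  R : World → World → Prop
  V : α → World → Prop

/-- Truth of a formula at a world of a model. -/
def Sat {α : Type} (M : Kripke α) : Fml α → M.World → Prop
  | .var p, w => M.V p w
  | .nvar p, w => ¬ M.V p w
  | .neg φ, w => ¬ Sat M φ w
  | .and φ ψ, w => Sat M φ w ∧ Sat M ψ w
  | .or φ ψ, w => Sat M φ w ∨ Sat M ψ w
  | .box φ, w => ∀ v, M.R w v → Sat M φ v
  | .dia φ, w => ∃ v, M.R w v ∧ Sat M φ v
  | .tru, _ => True
  | .fls, _ => False

/-- Modal depth: depth of nesting of `□` and `◇`. -/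
def mdep {α : Type} : Fml α → ℕ
  | .var _ => 0
  | .nvar _ => 0
  | .neg φ => mdep φ
  | .and φ ψ => max (mdep φ) (mdep ψ)
  | .or φ ψ => max (mdep φ) (mdep ψ)
  | .box φ => mdep φ + 1
  | .dia φ => mdep φ + 1
  | .tru => 0
  | .fls => 0

/-- Conjunction of a list of formulas; the empty conjunction is the always-true formula. -/
def bigConj {α : Type} : List (Fml α) → Fml α
  | [] => .tru
  | [φ] => φ
  | φ :: rest => .and φ (bigConj rest)

/-- `□^k φ`. -/
def boxI {α : Type} : ℕ → Fml α → Fml α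
  | 0, φ => φ
  | k + 1, φ => .box (boxI k φ)

/-- `◇^k φ`. -/
def diaI {α : Type} : ℕ → Fml α → Fml α
  | 0, φ => φ
  | k + 1, φ => .dia (diaI k φ)

/-- `(◇□)^k φ`. -/
def diaBoxI {α : Type} : ℕ → Fml α → Fml α
  | 0, φ => φ
  | k + 1, φ => .dia (.box (diaBoxI k φ))

/-- The literal with variable `l.1` and sign `l.2` (`true` = positive). -/
def litF {α : Type} (l : α × Bool) : Fml α := if l.2 then .var l.1 else .nvar l.1

/-- The variable `p` occurs in the formula. -/
def occursV {α : Type} (p : α) : Fml α → Prop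
  | .var q => p = q
  | .nvar q => p = q
  | .neg φ => occursV p φ
  | .and φ ψ => occursV p φ ∨ occursV p ψ
  | .or φ ψ => occursV p φ ∨ occursV p ψ
  | .box φ => occursV p φ
  | .dia φ => occursV p φ
  | .tru => False
  | .fls => False

/-- Poor man's formulas: built from literals, `∧`, `□`, `◇` only. -/
def PoorF {α : Type} : Fml α → Prop
  | .var _ => True
  | .nvar _ => True
  | .and φ ψ => PoorF φ ∧ PoorF ψ
  | .box φ => PoorF φ
  | .dia φ => PoorF φ
  | _ => False

/-- Formulas of the language `L`: built from literals, `∧`, `∨`, `□`, `◇`. -/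
def InL {α : Type} : Fml α → Prop
  | .var _ => True
  | .nvar _ => True
  | .and φ ψ => InL φ ∧ InL ψ
  | .or φ ψ => InL φ ∧ InL ψ
  | .box φ => InL φ
  | .dia φ => InL φ
  | _ => False

/-- Every world has at most one successor. -/
def AtMostOne {W : Type} (R : W → W → Prop) : Prop :=
  ∀ w v v', R w v → R w v' → v = v'

/-- Every world has at least one successor. -/
def AtLeastOne {W : Type} (R : W → W → Prop) : Prop :=
  ∀ w, ∃ v, R w v

/-- Every world has at most two successors. -/
def AtMostTwo {W : Type} (R : W → W → Prop) : Prop :=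
  ∀ w v₁ v₂ v₃, R w v₁ → R w v₂ → R w v₃ → v₁ = v₂ ∨ v₁ = v₃ ∨ v₂ = v₃

/-- `chainR R n w v`: there is an `R`-path of length exactly `n` from `w` to `v`. -/
def chainR {W : Type} (R : W → W → Prop) : ℕ → W → W → Prop
  | 0, w, v => w = v
  | k + 1, w, v => ∃ u, R w u ∧ chainR R k u v

/-- `R` is the parent-child relation of a rooted tree with root `root`
in which every node has at most two children. -/
structure IsBinTree {W : Type} (R : W → W → Prop) (root : W) : Prop where
  reach : ∀ w, Relation.ReflTransGen R root w
  root_no_parent : ∀ w, ¬ R w root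
  unique_parent : ∀ w v v', R v w → R v' w → v = v'
  acyclic : ∀ w, ¬ Relation.TransGen R w w
  at_most_two_children : ∀ w v₁ v₂ v₃, R w v₁ → R w v₂ → R w v₃ → v₁ = v₂ ∨ v₁ = v₃ ∨ v₂ = v₃

/-- `φ_exp = ⋀_{i=1}^n □^{i-1}(◇□^{n-i} p_i ∧ ◇□^{n-i} p̄_i)`, with `p_i = var i`. -/
def phiExp (n : ℕ) : Fml ℕ :=
  bigConj ((List.range n).map (fun j =>
    boxI j (.and (.dia (boxI (n - 1 - j) (.var (j + 1))))
                 (.dia (boxI (n - 1 - j) (.nvar (j + 1)))))))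

/-- Satisfiability with respect to the class of all frames. -/
def SatAll (φ : Fml ℕ) : Prop := ∃ (M : Kripke ℕ) (w : M.World), Sat M φ w

/-- Satisfiability with respect to `F≤1`. -/
def SatLe1 (φ : Fml ℕ) : Prop := ∃ M : Kripke ℕ, AtMostOne M.R ∧ ∃ w, Sat M φ w

/-- Satisfiability with respect to `F≥1`. -/
def SatGe1 (φ : Fml ℕ) : Prop := ∃ M : Kripke ℕ, AtLeastOne M.R ∧ ∃ w, Sat M φ w

/-- Satisfiability with respect to `F≤2`. -/
def SatLe2 (φ : Fml ℕ) : Prop := ∃ M : Kripke ℕ, AtMostTwo M.R ∧ ∃ w, Sat M φ w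

/-- A one-world model with no successors, realizing the boolean assignment `v`;
truth at its world is propositional truth for formulas without modal operators. -/
def propModel (v : ℕ → Bool) : Kripke ℕ :=
  { World := Unit, nonempty := ⟨()⟩, R := fun _ _ => False, V := fun p _ => v p = true }

/-- Propositional satisfaction of `φ` under the assignment `v`. -/
def PropSat (v : ℕ → Bool) (φ : Fml ℕ) : Prop := Sat (propModel v) φ ()


/-- `label_false(ℓ₁ ∧ ℓ₂ ∧ ℓ₃) =
□^{a-1} ◇ □^{b-a-1} ◇ □^{c-b-1} ◇ □^{n-c} (ℓ₁ ∧ ℓ₂ ∧ ℓ₃ ∧ f)`, where the literals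
`ℓ₁, ℓ₂, ℓ₃` have variables `a, b, c` and signs `s₁, s₂, s₃`, and `fv` is the
variable `f`. -/
def labelFalse (n a b c : ℕ) (s₁ s₂ s₃ : Bool) (fv : ℕ) : Fml ℕ :=
  boxI (a - 1) (.dia (boxI (b - a - 1) (.dia (boxI (c - b - 1) (.dia (boxI (n - c)
    (.and (litF (a, s₁)) (.and (litF (b, s₂)) (.and (litF (c, s₃)) (.var fv))))))))))

section Helpers

variable {α : Type} {M : Kripke α}

theorem sat_bigConj : ∀ (L : List (Fml α)) (w : M.World), Sat M (bigConj L) w →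
    ∀ φ ∈ L, Sat M φ w := by
  intro L
  induction L with
  | nil => intro w h φ hφ; simp at hφ
  | cons φ rest ih =>
    intro w h ψ hψ
    cases rest with
    | nil =>
      simp at hψ; subst hψ; exact h
    | cons χ rest' =>
      have h1 : Sat M φ w ∧ Sat M (bigConj (χ :: rest')) w := h
      rcases List.mem_cons.1 hψ with h2 | h2
      · subst h2; exact h1.1
      · exact ih w h1.2 ψ h2

theorem chainR_comp {W : Type} {R : W → W → Prop} :
    ∀ (i : ℕ) {j : ℕ} {x y z : W}, chainR R i x y → chainR R j y z →
      chainR R (i + j) x z := by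
  intro i
  induction i with
  | zero =>
    intro j x y z h1 h2
    rw [Nat.zero_add]
    have hxy : x = y := h1
    subst hxy; exact h2
  | succ k ih =>
    intro j x y z h1 h2
    obtain ⟨u, hxu, hk⟩ := h1
    rw [Nat.succ_add]
    exact ⟨u, hxu, ih hk h2⟩

theorem chainR_split {W : Type} {R : W → W → Prop} :
    ∀ (i : ℕ) {j : ℕ} {x z : W}, chainR R (i + j) x z →
      ∃ y, chainR R i x y ∧ chainR R j y z := by
  intro i
  induction i with
  | zero =>
    intro j x z h
    rw [Nat.zero_add] at h
    exact ⟨x, rfl, h⟩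
  | succ k ih =>
    intro j x z h
    rw [Nat.succ_add] at h
    obtain ⟨u, hxu, hrest⟩ := h
    obtain ⟨y, h1, h2⟩ := ih hrest
    exact ⟨y, ⟨u, hxu, h1⟩, h2⟩

theorem chainR_cast {W : Type} {R : W → W → Prop} {i j : ℕ} {x y : W}
    (h : i = j) (hc : chainR R i x y) : chainR R j x y := by
  subst h; exact hc

theorem chainR_one {W : Type} {R : W → W → Prop} {x y : W} (h : chainR R 1 x y) : R x y := by
  obtain ⟨t, ht, he⟩ := h
  have he' : t = y := he
  rwa [he'] at ht

theorem sat_boxI_chain {φ : Fml α} :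
    ∀ (k : ℕ) {x y : M.World}, Sat M (boxI k φ) x → chainR M.R k x y → Sat M φ y := by
  intro k
  induction k with
  | zero =>
    intro x y h hc
    have hxy : x = y := hc
    subst hxy; exact h
  | succ m ih =>
    intro x y h hc
    obtain ⟨u, hxu, hm⟩ := hc
    have h' : ∀ v, M.R x v → Sat M (boxI m φ) v := h
    exact ih (h' u hxu) hm

theorem sat_boxI_intro {φ : Fml α} :
    ∀ (k : ℕ) (x : M.World), (∀ y, chainR M.R k x y → Sat M φ y) → Sat M (boxI k φ) x := by
  intro k
  induction k with
  | zero => intro x h; exact h x rfl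
  | succ m ih =>
    intro x h
    show ∀ v, M.R x v → Sat M (boxI m φ) v
    intro v hv
    exact ih v (fun y hy => h y ⟨v, hv, hy⟩)

theorem lit_contra {p : α} {s : Bool} {w : M.World}
    (h1 : Sat M (litF (p, s)) w) (h2 : Sat M (litF (p, !s)) w) : False := by
  cases s <;> simp [litF, Sat] at h1 h2 <;> tauto

end Helpers

section Context

variable {n : ℕ} {M : Kripke ℕ} {r : M.World}

theorem phi_at (hexp : Sat M (phiExp n) r) {j : ℕ} (hj : j < n) {u : M.World}
    (hu : chainR M.R j r u) :
    (∃ v, M.R u v ∧ Sat M (boxI (n - 1 - j) (.var (j + 1))) v) ∧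
    (∃ v, M.R u v ∧ Sat M (boxI (n - 1 - j) (.nvar (j + 1))) v) := by
  have hmem : boxI j (Fml.and (.dia (boxI (n - 1 - j) (.var (j + 1))))
      (.dia (boxI (n - 1 - j) (.nvar (j + 1))))) ∈
      (List.range n).map (fun j => boxI j (Fml.and (.dia (boxI (n - 1 - j) (.var (j + 1))))
        (.dia (boxI (n - 1 - j) (.nvar (j + 1)))))) :=
    List.mem_map.2 ⟨j, List.mem_range.2 hj, rfl⟩
  have h1 := sat_bigConj _ r hexp _ hmem
  have h2 : Sat M (Fml.and (.dia (boxI (n - 1 - j) (.var (j + 1))))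
      (.dia (boxI (n - 1 - j) (.nvar (j + 1))))) u := sat_boxI_chain j h1 hu
  exact ⟨h2.1, h2.2⟩

theorem has_succ (hexp : Sat M (phiExp n) r) {j : ℕ} (hj : j < n) {u : M.World}
    (hu : chainR M.R j r u) : ∃ v, M.R u v := by
  obtain ⟨⟨v, hv, _⟩, _⟩ := phi_at hexp hj hu
  exact ⟨v, hv⟩

theorem ext_chain (hexp : Sat M (phiExp n) r) :
    ∀ (k : ℕ) {d : ℕ} {x : M.World}, d + k ≤ n → chainR M.R d r x →
      ∃ y, chainR M.R k x y := by
  intro k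
  induction k with
  | zero => intro d x _ _; exact ⟨x, rfl⟩
  | succ m ih =>
    intro d x h hx
    obtain ⟨v, hv⟩ := has_succ hexp (show d < n by omega) hx
    have hxv : chainR M.R (d + 1) r v := chainR_comp d hx ⟨v, hv, rfl⟩
    obtain ⟨y, hy⟩ := ih (by omega) hxv
    exact ⟨y, v, hv, hy⟩

theorem dia_chain (hexp : Sat M (phiExp n) r) {ψ : Fml ℕ} {k d : ℕ} {x : M.World}
    (h : d + k < n) (hx : chainR M.R d r x) (hs : Sat M (boxI k (.dia ψ)) x) :
    ∃ y, chainR M.R (k + 1) x y ∧ Sat M ψ y := by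
  obtain ⟨y, hy⟩ := ext_chain hexp k (by omega) hx
  have hd : Sat M (.dia ψ) y := sat_boxI_chain k hs hy
  obtain ⟨z, hz, hsz⟩ := hd
  exact ⟨z, chainR_comp k hy ⟨z, hz, rfl⟩, hsz⟩

theorem det (hexp : Sat M (phiExp n) r) (hbt : AtMostTwo M.R) {j : ℕ} (hj : j < n)
    {s : Bool} {u v v' w w' : M.World} (hu : chainR M.R j r u)
    (hv : M.R u v) (hv' : M.R u v')
    (hcw : chainR M.R (n - 1 - j) v w) (hcw' : chainR M.R (n - 1 - j) v' w')
    (hl : Sat M (litF (j + 1, s)) w) (hl' : Sat M (litF (j + 1, s)) w') : v = v' := by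
  obtain ⟨⟨ct, hRt, hst⟩, ⟨cf, hRf, hsf⟩⟩ := phi_at hexp hj hu
  have key : ∀ (cs co : M.World), M.R u cs → M.R u co →
      Sat M (boxI (n - 1 - j) (litF (j + 1, s))) cs →
      Sat M (boxI (n - 1 - j) (litF (j + 1, !s))) co → v = cs ∧ v' = cs := by
    intro cs co hRcs hRco hscs hsco
    have hne : cs ≠ co := by
      rintro rfl
      obtain ⟨m, hm⟩ := ext_chain hexp (n - 1 - j) (d := j + 1) (by omega)
        (chainR_comp j hu ⟨cs, hRcs, rfl⟩)
      exact lit_contra (sat_boxI_chain _ hscs hm) (sat_boxI_chain _ hsco hm)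
    constructor
    · rcases hbt u cs co v hRcs hRco hv with h | h | h
      · exact absurd h hne
      · exact h.symm
      · exact absurd (lit_contra hl (sat_boxI_chain _ (h ▸ hsco) hcw)) (fun x => x)
    · rcases hbt u cs co v' hRcs hRco hv' with h | h | h
      · exact absurd h hne
      · exact h.symm
      · exact absurd (lit_contra hl' (sat_boxI_chain _ (h ▸ hsco) hcw')) (fun x => x)
  cases s with
  | true =>
    obtain ⟨h1, h2⟩ := key ct cf hRt hRf hst hsf
    rw [h1, h2]
  | false =>
    obtain ⟨h1, h2⟩ := key cf ct hRf hRt hsf hst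
    rw [h1, h2]

end Context
/-- If `M` is a model based on a binary tree with root `r` and
`M, r ⊨ φ_exp`, then `M, r ⊨ label_false(ℓ₁ ∧ ℓ₂ ∧ ℓ₃)` iff `f` holds in every world at
depth `n` in which `ℓ₁ ∧ ℓ₂ ∧ ℓ₃` holds. -/
theorem stmt11 (n : ℕ) (hn : 1 ≤ n) (a b c : ℕ)
    (ha : 1 ≤ a) (hab : a < b) (hbc : b < c) (hcn : c ≤ n)
    (s₁ s₂ s₃ : Bool) (fv : ℕ) (hfv : ∀ i, 1 ≤ i → i ≤ n → fv ≠ i)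
    (M : Kripke ℕ) (r : M.World) (htree : IsBinTree M.R r)
    (hexp : Sat M (phiExp n) r) :
    Sat M (labelFalse n a b c s₁ s₂ s₃ fv) r ↔
      ∀ w, chainR M.R n r w →
        Sat M (.and (litF (a, s₁)) (.and (litF (b, s₂)) (litF (c, s₃)))) w →
        M.V fv w := by
  have hbt : AtMostTwo M.R := htree.at_most_two_children
  constructor
  · -- forward direction
    intro hlab w hw hlits
    have hlits' : Sat M (litF (a, s₁)) w ∧ Sat M (litF (b, s₂)) w ∧ Sat M (litF (c, s₃)) w :=
      hlits
    have hsplit : n = (a - 1) + (1 + ((b - a - 1) + (1 + ((c - b - 1) + (1 + (n - c)))))) := by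
      omega
    rw [hsplit] at hw
    obtain ⟨u, hru, hw1⟩ := chainR_split (a - 1) hw
    obtain ⟨ua, hua1, hw2⟩ := chainR_split 1 hw1
    have hRua : M.R u ua := chainR_one hua1
    obtain ⟨x1, hx1, hw3⟩ := chainR_split (b - a - 1) hw2
    obtain ⟨ub, hub1, hw4⟩ := chainR_split 1 hw3
    have hRub : M.R x1 ub := chainR_one hub1
    obtain ⟨y1, hy1, hw5⟩ := chainR_split (c - b - 1) hw4
    obtain ⟨uc, huc1, hw6⟩ := chainR_split 1 hw5
    have hRuc : M.R y1 uc := chainR_one huc1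
    have hl0 : Sat M (boxI (a - 1) (.dia (boxI (b - a - 1) (.dia (boxI (c - b - 1)
        (.dia (boxI (n - c) (.and (litF (a, s₁)) (.and (litF (b, s₂))
          (.and (litF (c, s₃)) (.var fv))))))))))) r := hlab
    -- level a
    have hd1 := sat_boxI_chain (a - 1) hl0 hru
    obtain ⟨v, hRv, hXv⟩ := hd1
    have hrv : chainR M.R a r v := chainR_cast (by omega) (chainR_comp (a - 1) hru (show chainR M.R 1 u v from ⟨v, hRv, rfl⟩))
    obtain ⟨y, hychain, hsy⟩ := dia_chain hexp (k := b - a - 1) (d := a) (by omega) hrv hXv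
    have hry : chainR M.R b r y := chainR_cast (by omega) (chainR_comp a hrv hychain)
    obtain ⟨z, hzchain, hsz⟩ := dia_chain hexp (k := c - b - 1) (d := b) (by omega) hry hsy
    have hrz : chainR M.R c r z := chainR_cast (by omega) (chainR_comp b hry hzchain)
    obtain ⟨w', hw'⟩ := ext_chain hexp (n - c) (d := c) (by omega) hrz
    have hconj' : Sat M (litF (a, s₁)) w ∧ Sat M (litF (b, s₂)) w ∧ Sat M (litF (c, s₃)) w :=
      hlits
    have hcw' : Sat M (litF (a, s₁)) w' ∧ Sat M (litF (b, s₂)) w' ∧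
        Sat M (litF (c, s₃)) w' ∧ Sat M (.var fv) w' := sat_boxI_chain (n - c) hsz hw'
    have hvw' : chainR M.R (n - 1 - (a - 1)) v w' := chainR_cast (by omega)
      (chainR_comp (b - a - 1 + 1) hychain (chainR_comp (c - b - 1 + 1) hzchain hw'))
    have huaw : chainR M.R (n - 1 - (a - 1)) ua w := chainR_cast (by omega) hw2
    have hl1w : Sat M (litF (a - 1 + 1, s₁)) w := by
      rw [show a - 1 + 1 = a by omega]; exact hlits'.1
    have hl1w' : Sat M (litF (a - 1 + 1, s₁)) w' := by
      rw [show a - 1 + 1 = a by omega]; exact hcw'.1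
    have hveq : v = ua := det hexp hbt (show a - 1 < n by omega) hru hRv hRua hvw' huaw hl1w' hl1w
    rw [hveq] at hXv
    -- level b
    have hd2 := sat_boxI_chain (b - a - 1) hXv hx1
    obtain ⟨v₂, hRv₂, hXv₂⟩ := hd2
    have hrx1 : chainR M.R (b - 1) r x1 := chainR_cast (by omega)
      (chainR_comp (a - 1) hru (chainR_comp 1 hua1 hx1))
    have hrv₂ : chainR M.R b r v₂ := chainR_cast (by omega)
      (chainR_comp (b - 1) hrx1 (show chainR M.R 1 x1 v₂ from ⟨v₂, hRv₂, rfl⟩))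
    obtain ⟨z₂, hz₂chain, hsz₂⟩ := dia_chain hexp (k := c - b - 1) (d := b) (by omega) hrv₂ hXv₂
    have hrz₂ : chainR M.R c r z₂ := chainR_cast (by omega) (chainR_comp b hrv₂ hz₂chain)
    obtain ⟨w₂, hw₂⟩ := ext_chain hexp (n - c) (d := c) (by omega) hrz₂
    have hcw₂ : Sat M (litF (a, s₁)) w₂ ∧ Sat M (litF (b, s₂)) w₂ ∧
        Sat M (litF (c, s₃)) w₂ ∧ Sat M (.var fv) w₂ := sat_boxI_chain (n - c) hsz₂ hw₂
    have hv₂w₂ : chainR M.R (n - 1 - (b - 1)) v₂ w₂ := chainR_cast (by omega)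
      (chainR_comp (c - b - 1 + 1) hz₂chain hw₂)
    have hubw : chainR M.R (n - 1 - (b - 1)) ub w := chainR_cast (by omega) hw4
    have hl2w : Sat M (litF (b - 1 + 1, s₂)) w := by
      rw [show b - 1 + 1 = b by omega]; exact hlits'.2.1
    have hl2w₂ : Sat M (litF (b - 1 + 1, s₂)) w₂ := by
      rw [show b - 1 + 1 = b by omega]; exact hcw₂.2.1
    have hv₂eq : v₂ = ub := det hexp hbt (show b - 1 < n by omega) hrx1 hRv₂ hRub hv₂w₂ hubw
      hl2w₂ hl2w
    rw [hv₂eq] at hXv₂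
    -- level c
    have hd3 := sat_boxI_chain (c - b - 1) hXv₂ hy1
    obtain ⟨v₃, hRv₃, hXv₃⟩ := hd3
    have hry1 : chainR M.R (c - 1) r y1 := chainR_cast (by omega)
      (chainR_comp (b - 1) hrx1 (chainR_comp 1 hub1 hy1))
    have hrv₃ : chainR M.R c r v₃ := chainR_cast (by omega)
      (chainR_comp (c - 1) hry1 (show chainR M.R 1 y1 v₃ from ⟨v₃, hRv₃, rfl⟩))
    obtain ⟨w₃, hw₃⟩ := ext_chain hexp (n - c) (d := c) (by omega) hrv₃
    have hcw₃ : Sat M (litF (a, s₁)) w₃ ∧ Sat M (litF (b, s₂)) w₃ ∧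
        Sat M (litF (c, s₃)) w₃ ∧ Sat M (.var fv) w₃ := sat_boxI_chain (n - c) hXv₃ hw₃
    have hv₃w₃ : chainR M.R (n - 1 - (c - 1)) v₃ w₃ := chainR_cast (by omega) hw₃
    have hucw : chainR M.R (n - 1 - (c - 1)) uc w := chainR_cast (by omega) hw6
    have hl3w : Sat M (litF (c - 1 + 1, s₃)) w := by
      rw [show c - 1 + 1 = c by omega]; exact hlits'.2.2
    have hl3w₃ : Sat M (litF (c - 1 + 1, s₃)) w₃ := by
      rw [show c - 1 + 1 = c by omega]; exact hcw₃.2.2.1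
    have hv₃eq : v₃ = uc := det hexp hbt (show c - 1 < n by omega) hry1 hRv₃ hRuc hv₃w₃ hucw
      hl3w₃ hl3w
    rw [hv₃eq] at hXv₃
    have hfin : Sat M (litF (a, s₁)) w ∧ Sat M (litF (b, s₂)) w ∧
        Sat M (litF (c, s₃)) w ∧ Sat M (.var fv) w := sat_boxI_chain (n - c) hXv₃ hw6
    exact hfin.2.2.2
  · -- backward direction
    intro h
    show Sat M (boxI (a - 1) (.dia (boxI (b - a - 1) (.dia (boxI (c - b - 1)
        (.dia (boxI (n - c) (.and (litF (a, s₁)) (.and (litF (b, s₂))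
          (.and (litF (c, s₃)) (.var fv))))))))))) r
    apply sat_boxI_intro
    intro u hu
    obtain ⟨⟨ct, hRt, hst⟩, ⟨cf, hRf, hsf⟩⟩ := phi_at hexp (show a - 1 < n by omega) hu
    rw [show a - 1 + 1 = a by omega] at hst hsf
    obtain ⟨c1, hRc1, hsc1⟩ : ∃ v, M.R u v ∧ Sat M (boxI (n - 1 - (a - 1)) (litF (a, s₁))) v := by
      cases s₁
      · exact ⟨cf, hRf, hsf⟩
      · exact ⟨ct, hRt, hst⟩
    refine ⟨c1, hRc1, ?_⟩
    apply sat_boxI_intro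
    intro x hx
    have hrx : chainR M.R (b - 1) r x := chainR_cast (by omega)
      (chainR_comp (a - 1) hu (chainR_comp 1 ⟨c1, hRc1, rfl⟩ hx))
    obtain ⟨⟨ct2, hRt2, hst2⟩, ⟨cf2, hRf2, hsf2⟩⟩ := phi_at hexp (show b - 1 < n by omega) hrx
    rw [show b - 1 + 1 = b by omega] at hst2 hsf2
    obtain ⟨c2, hRc2, hsc2⟩ : ∃ v, M.R x v ∧ Sat M (boxI (n - 1 - (b - 1)) (litF (b, s₂))) v := by
      cases s₂
      · exact ⟨cf2, hRf2, hsf2⟩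
      · exact ⟨ct2, hRt2, hst2⟩
    refine ⟨c2, hRc2, ?_⟩
    apply sat_boxI_intro
    intro y hy
    have hry : chainR M.R (c - 1) r y := chainR_cast (by omega)
      (chainR_comp (b - 1) hrx (chainR_comp 1 ⟨c2, hRc2, rfl⟩ hy))
    obtain ⟨⟨ct3, hRt3, hst3⟩, ⟨cf3, hRf3, hsf3⟩⟩ := phi_at hexp (show c - 1 < n by omega) hry
    rw [show c - 1 + 1 = c by omega] at hst3 hsf3
    obtain ⟨c3, hRc3, hsc3⟩ : ∃ v, M.R y v ∧ Sat M (boxI (n - 1 - (c - 1)) (litF (c, s₃))) v := by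
      cases s₃
      · exact ⟨cf3, hRf3, hsf3⟩
      · exact ⟨ct3, hRt3, hst3⟩
    refine ⟨c3, hRc3, ?_⟩
    apply sat_boxI_intro
    intro w hw
    have hch3 : chainR M.R (n - 1 - (c - 1)) c3 w := chainR_cast (by omega) hw
    have hl3 : Sat M (litF (c, s₃)) w := sat_boxI_chain _ hsc3 hch3
    have hch2 : chainR M.R (n - 1 - (b - 1)) c2 w := chainR_cast (by omega)
      (chainR_comp (c - b - 1) hy (chainR_comp 1 ⟨c3, hRc3, rfl⟩ hw))
    have hl2 : Sat M (litF (b, s₂)) w := sat_boxI_chain _ hsc2 hch2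
    have hch1 : chainR M.R (n - 1 - (a - 1)) c1 w := chainR_cast (by omega)
      (chainR_comp (b - a - 1) hx (chainR_comp 1 ⟨c2, hRc2, rfl⟩
        (chainR_comp (c - b - 1) hy (chainR_comp 1 ⟨c3, hRc3, rfl⟩ hw))))
    have hl1 : Sat M (litF (a, s₁)) w := sat_boxI_chain _ hsc1 hch1
    have hrw : chainR M.R n r w := chainR_cast (by omega)
      (chainR_comp (a - 1) hu (chainR_comp 1 ⟨c1, hRc1, rfl⟩
        (chainR_comp (b - a - 1) hx (chainR_comp 1 ⟨c2, hRc2, rfl⟩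
          (chainR_comp (c - b - 1) hy (chainR_comp 1 ⟨c3, hRc3, rfl⟩ hw))))))
    have hf : M.V fv w := h w hrw ⟨hl1, hl2, hl3⟩
    exact ⟨hl1, hl2, hl3, hf⟩

end PoorMansModal
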